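/- Let σ ≥ 0, n, m ≥ 1, let P be any type (the parameter space), let y : Fin m → ℝ be targets, and let ŷ : P → Fin m → ℝ and g : P → Fin m → ℝⁿ be functions (predictions and their weight-gradients). Let μ be the product measure on ℝⁿ whose coordinates are i.i.d. Gaussian with mean 0 and variance σ² (the law of δ ~ N(0, σ² Iₙ)). Define the noisy objective L̃(w) = ∫ (1/m) ∑_{i} (ŷ(w)ᵢ + ⟨g(w)ᵢ, δ⟩ − yᵢ)² dμ(δ) and the regularized objective R(w) = (1/m) ∑_i (ŷ(w)ᵢ − yᵢ)² + σ² (1/m) ∑_i ‖g(w)ᵢ‖². Then L̃(w) = R(w) for every w ∈ P; consequently, w₀ ∈ P minimizes L̃ over P if and only if w₀ minimizes R over P. That is, minimizing the expected loss of the (first-order) quantized network is equivalent to minimizing the loss of the non-quantized network with gradient-norm regularization. -/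

import Mathlib

/-!
For square-integrable `X`, `E (a + X)² = (a + E X)² + Var X`. Under the product Gaussian
`δ ~ N(0, σ² Iₙ)` the linear form `⟪u, δ⟫ = ∑ⱼ uⱼ δⱼ` is a sum of independent centred terms, so it
has mean `0` and variance `σ² ‖u‖²`. Applied termwise with `a = ŷ(w)ᵢ − yᵢ` and `u = g(w)ᵢ`, this
gives `L̃ = R` pointwise, and equal objectives have the same minimizers.
-/

open MeasureTheory ProbabilityTheory
open scoped NNReal RealInnerProductSpace

lemma integral_const_add_sq {Ω : Type*} [MeasurableSpace Ω] {μ : Measure Ω}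
    [IsProbabilityMeasure μ] {X : Ω → ℝ} (hX : MemLp X 2 μ) (a : ℝ) :
    ∫ ω, (a + X ω) ^ 2 ∂μ = (a + μ[X]) ^ 2 + Var[X; μ] := by
  have hX1 : Integrable X μ := hX.integrable one_le_two
  calc ∫ ω, (a + X ω) ^ 2 ∂μ = ∫ ω, (a ^ 2 + 2 * a * X ω) + X ω ^ 2 ∂μ := by
        simp_rw [add_sq]
    _ = a ^ 2 + 2 * a * μ[X] + μ[X ^ 2] := by
        rw [integral_add (by fun_prop) hX.integrable_sq,
          integral_add (integrable_const _) (hX1.const_mul _), integral_const_mul]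
        simp
    _ = (a + μ[X]) ^ 2 + Var[X; μ] := by rw [variance_eq_sub hX]; ring

section LinearFormPi

variable {ι : Type*} [Fintype ι] {ν : Measure ℝ} [IsProbabilityMeasure ν]

lemma memLp_sum_mul_eval_pi (hν : MemLp id 2 ν) (c : ι → ℝ) :
    MemLp (fun x : ι → ℝ => ∑ i, c i * x i) 2 (Measure.pi fun _ => ν) :=
  memLp_finsetSum _ fun i _ =>
    (hν.comp_measurePreserving (measurePreserving_eval _ i)).const_mul (c i)

lemma integral_sum_mul_eval_pi (hν : Integrable id ν) (c : ι → ℝ) :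
    ∫ x, ∑ i, c i * x i ∂(Measure.pi fun _ => ν) = (∑ i, c i) * ∫ x, x ∂ν := by
  rw [integral_finsetSum _ fun i _ => (integrable_eval hν).const_mul (c i), Finset.sum_mul]
  simp_rw [integral_const_mul, integral_eval]

lemma variance_sum_mul_eval_pi (hν : MemLp id 2 ν) (c : ι → ℝ) :
    Var[fun x : ι → ℝ => ∑ i, c i * x i; Measure.pi fun _ => ν] =
      (∑ i, c i ^ 2) * Var[id; ν] := by
  calc Var[fun x : ι → ℝ => ∑ i, c i * x i; Measure.pi fun _ => ν]
      = Var[∑ i, fun x : ι → ℝ => c i * id (x i); Measure.pi fun _ => ν] := by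
        congr 1; ext x; simp
    _ = ∑ i, Var[fun x => c i * id x; ν] := variance_sum_pi fun i => hν.const_mul (c i)
    _ = (∑ i, c i ^ 2) * Var[id; ν] := by simp_rw [variance_const_mul, Finset.sum_mul]

end LinearFormPi

noncomputable def isotropicGaussian (ι : Type*) [Fintype ι] (v : ℝ≥0) :
    Measure (EuclideanSpace ℝ ι) :=
  (Measure.pi fun _ : ι => gaussianReal 0 v).map (MeasurableEquiv.toLp 2 (ι → ℝ))

section IsotropicGaussian

variable {ι : Type*} [Fintype ι] (v : ℝ≥0) (u : EuclideanSpace ℝ ι)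

instance : IsProbabilityMeasure (isotropicGaussian ι v) := by
  unfold isotropicGaussian; exact Measure.isProbabilityMeasure_map (by fun_prop)

lemma inner_toLp_eq_sum (x : ι → ℝ) : ⟪u, WithLp.toLp 2 x⟫ = ∑ i, u i * x i := by
  simp [PiLp.inner_apply, mul_comm]

lemma memLp_inner_isotropicGaussian :
    MemLp (fun δ => ⟪u, δ⟫) 2 (isotropicGaussian ι v) := by
  rw [isotropicGaussian, MeasurableEquiv.memLp_map_measure_iff]
  convert memLp_sum_mul_eval_pi (ν := gaussianReal 0 v) IsGaussian.memLp_two_id u.ofLp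
    using 1
  ext x
  exact inner_toLp_eq_sum u x

lemma integral_inner_isotropicGaussian :
    ∫ δ, ⟪u, δ⟫ ∂(isotropicGaussian ι v) = 0 := by
  rw [isotropicGaussian, integral_map_equiv]
  simp only [MeasurableEquiv.coe_toLp, inner_toLp_eq_sum]
  rw [integral_sum_mul_eval_pi IsGaussian.integrable_id, integral_id_gaussianReal, mul_zero]

lemma variance_inner_isotropicGaussian :
    Var[fun δ => ⟪u, δ⟫; isotropicGaussian ι v] = v * ‖u‖ ^ 2 := by
  rw [isotropicGaussian, variance_map_equiv]
  have : (fun δ => ⟪u, δ⟫) ∘ MeasurableEquiv.toLp 2 (ι → ℝ) = fun x => ∑ i, u i * x i := by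
    ext x; exact inner_toLp_eq_sum u x
  rw [this, variance_sum_mul_eval_pi IsGaussian.memLp_two_id, variance_id_gaussianReal,
    EuclideanSpace.real_norm_sq_eq, mul_comm]

lemma integral_const_add_inner_sq_isotropicGaussian (a : ℝ) :
    ∫ δ, (a + ⟪u, δ⟫) ^ 2 ∂(isotropicGaussian ι v) = a ^ 2 + v * ‖u‖ ^ 2 := by
  rw [integral_const_add_sq (memLp_inner_isotropicGaussian v u),
    integral_inner_isotropicGaussian, variance_inner_isotropicGaussian, add_zero]

end IsotropicGaussian

theorem minimizing_noisy_loss_iff_minimizing_gradNorm_regularized_general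
    (σ : ℝ≥0) (n m : ℕ) (P : Type*)
    (y : Fin m → ℝ) (yPred : P → Fin m → ℝ) (g : P → Fin m → EuclideanSpace ℝ (Fin n)) :
    let μ : Measure (EuclideanSpace ℝ (Fin n)) :=
      (Measure.pi fun _ : Fin n => gaussianReal 0 (σ ^ 2)).map (MeasurableEquiv.toLp 2 (Fin n → ℝ))
    let L : P → ℝ := fun w =>
      ∫ δ, (1 / (m : ℝ)) * ∑ i, (yPred w i + ⟪g w i, δ⟫ - y i) ^ 2 ∂μ
    let R : P → ℝ := fun w =>
      (1 / (m : ℝ)) * ∑ i, (yPred w i - y i) ^ 2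
        + (σ : ℝ) ^ 2 * ((1 / (m : ℝ)) * ∑ i, ‖g w i‖ ^ 2)
    (∀ w : P, L w = R w) ∧
      ∀ w₀ : P, (∀ w : P, L w₀ ≤ L w) ↔ (∀ w : P, R w₀ ≤ R w) := by
  intro μ L R
  have hμ : μ = isotropicGaussian (Fin n) (σ ^ 2) := rfl
  have hLR : ∀ w, L w = R w := by
    intro w
    simp only [L, R, hμ, add_sub_right_comm]
    have hint : ∀ i, Integrable (fun δ => (yPred w i - y i + ⟪g w i, δ⟫) ^ 2)
        (isotropicGaussian (Fin n) (σ ^ 2)) := fun i =>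
      ((memLp_const (yPred w i - y i)).add
        (memLp_inner_isotropicGaussian (σ ^ 2) (g w i))).integrable_sq
    rw [integral_const_mul, integral_finsetSum _ fun i _ => hint i]
    simp_rw [integral_const_add_inner_sq_isotropicGaussian, Finset.sum_add_distrib,
      ← Finset.mul_sum]
    push_cast
    ring
  exact ⟨hLR, fun w₀ => by simp only [hLR]⟩

/-- **Conclusion of Theorem 1 (QReg): equivalence of the two minimization problems.**
With `δ ~ N(0, σ² Iₙ)`, the noisy objective
`L̃(w) = ∫ (1/m) ∑ᵢ (ŷ(w)ᵢ + ⟪g(w)ᵢ, δ⟫ − yᵢ)² dμ(δ)`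
coincides with the regularized objective
`R(w) = (1/m) ∑ᵢ (ŷ(w)ᵢ − yᵢ)² + σ² (1/m) ∑ᵢ ‖g(w)ᵢ‖²` for every `w`, and consequently
`w₀` minimizes `L̃` iff it minimizes `R`:  minimizing the expected loss of the
(first-order) quantized network is equivalent to minimizing the loss of the non-quantized
network with gradient-norm regularization. -/
theorem minimizing_noisy_loss_iff_minimizing_gradNorm_regularized
    (σ : ℝ≥0) (n m : ℕ) (hn : 1 ≤ n) (hm : 1 ≤ m) (P : Type*)
    (y : Fin m → ℝ) (yPred : P → Fin m → ℝ) (g : P → Fin m → EuclideanSpace ℝ (Fin n)) :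
    let μ : Measure (EuclideanSpace ℝ (Fin n)) :=
      (Measure.pi fun _ : Fin n => gaussianReal 0 (σ ^ 2)).map (MeasurableEquiv.toLp 2 (Fin n → ℝ))
    let L : P → ℝ := fun w =>
      ∫ δ, (1 / (m : ℝ)) * ∑ i, (yPred w i + ⟪g w i, δ⟫ - y i) ^ 2 ∂μ
    let R : P → ℝ := fun w =>
      (1 / (m : ℝ)) * ∑ i, (yPred w i - y i) ^ 2
        + (σ : ℝ) ^ 2 * ((1 / (m : ℝ)) * ∑ i, ‖g w i‖ ^ 2)
    (∀ w : P, L w = R w) ∧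
      ∀ w₀ : P, (∀ w : P, L w₀ ≤ L w) ↔ (∀ w : P, R w₀ ≤ R w) :=
  minimizing_noisy_loss_iff_minimizing_gradNorm_regularized_general σ n m P y yPred g
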